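/- arXiv:2406.05781 — 2 statements merged into one kernel-verified Lean document; each statement's English description precedes it below -/
import Mathlib

section
/- Let (H,E) be an orthogonal semigroup of order m satisfying the CM condition. Then for every w ∈ Soc(H,E) and every h ∈ Ap(H,E) there exists a unique pair (h', u) with h' ∈ Ap(H,E), u ∈ ℕE and h + h' = w + u; moreover deg u = deg h + deg h' − deg w, and deg u is divisible by m (so that c_{w,h} := deg(u)/m is a nonnegative integer). -/
open scoped Classical

namespace AGpaper

/-- The degree of an integer vector: sum of coordinates. -/
def degZ {d : ℕ} (x : Fin d → ℤ) : ℤ := ∑ i, x i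

/-- An orthogonal semigroup of order `m` in `ℕ^d`. -/
def IsOrthogonal (d m : ℕ) (H : AddSubmonoid (Fin d → ℤ)) : Prop :=
  H.FG ∧
  (∀ x ∈ H, ∀ i, 0 ≤ x i) ∧
  (∀ i : Fin d, Pi.single i (m : ℤ) ∈ H) ∧
  (∃ n : ℕ, 0 < n ∧ ∀ x ∈ H, ∀ i, (m : ℤ) ∣ (n : ℤ) * x i) ∧
  (∀ i : Fin d, ∀ m' : ℕ, 0 < m' → m' < m → Pi.single i (m' : ℤ) ∉ H)

/-- Membership in `ℕE = ℕ(m e₁) + ⋯ + ℕ(m e_d)`. -/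
def inNE (d m : ℕ) (x : Fin d → ℤ) : Prop := ∀ i : Fin d, 0 ≤ x i ∧ (m : ℤ) ∣ x i

/-- Membership in `ℤE = ℤ(m e₁) + ⋯ + ℤ(m e_d)`. -/
def inZE (d m : ℕ) (x : Fin d → ℤ) : Prop := ∀ i : Fin d, (m : ℤ) ∣ x i

/-- The Apéry set of an orthogonal semigroup w.r.t. its extreme rays `m eᵢ`. -/
def apery (d m : ℕ) (H : AddSubmonoid (Fin d → ℤ)) : Set (Fin d → ℤ) :=
  {x | x ∈ H ∧ ∀ i : Fin d, x - Pi.single i (m : ℤ) ∉ H}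

/-- The socle: maximal elements of the Apéry set with respect to `≤_H`. -/
def soc (d m : ℕ) (H : AddSubmonoid (Fin d → ℤ)) : Set (Fin d → ℤ) :=
  {x | x ∈ apery d m H ∧ ∀ y ∈ apery d m H, y - x ∈ H → x = y}

/-- The CM condition: every element of `G(H)` is uniquely `a + z`, `a ∈ Ap(H,E)`, `z ∈ ℤE`. -/
def CMcond (d m : ℕ) (H : AddSubmonoid (Fin d → ℤ)) : Prop :=
  ∀ g ∈ AddSubgroup.closure (H : Set (Fin d → ℤ)),
    ∃! a, a ∈ apery d m H ∧ inZE d m (g - a)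


lemma degZ_nonneg {d : ℕ} {x : Fin d → ℤ} (hx : ∀ i, 0 ≤ x i) : 0 ≤ degZ x :=
  Finset.sum_nonneg fun i _ => hx i

lemma degZ_sub_single {d m : ℕ} (x : Fin d → ℤ) (i : Fin d) :
    degZ (x - Pi.single i (m : ℤ)) = degZ x - m := by
  simp [degZ, Finset.sum_sub_distrib, Finset.sum_pi_single']

lemma degZ_add {d : ℕ} (x y : Fin d → ℤ) : degZ (x + y) = degZ x + degZ y := by
  simp [degZ, Finset.sum_add_distrib]

/-- Greedy decomposition: every element of `H` is an Apéry element plus an element of `ℕE`. -/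
lemma exists_apery_decomp {d m : ℕ} (hm : 1 ≤ m) (H : AddSubmonoid (Fin d → ℤ))
    (hpos : ∀ x ∈ H, ∀ i, 0 ≤ x i) :
    ∀ n : ℕ, ∀ x ∈ H, (degZ x).toNat ≤ n →
      ∃ a t, a ∈ apery d m H ∧ inNE d m t ∧ x = a + t := by
  intro n
  induction n with
  | zero =>
    intro x hx hdeg
    by_cases hap : ∀ i : Fin d, x - Pi.single i (m : ℤ) ∉ H
    · exact ⟨x, 0, ⟨hx, hap⟩, fun i => by simp, by simp⟩
    · push_neg at hap
      obtain ⟨i, hi⟩ := hap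
      have h1 := degZ_nonneg (hpos _ hi)
      rw [degZ_sub_single] at h1
      omega
  | succ n ih =>
    intro x hx hdeg
    by_cases hap : ∀ i : Fin d, x - Pi.single i (m : ℤ) ∉ H
    · exact ⟨x, 0, ⟨hx, hap⟩, fun i => by simp, by simp⟩
    · push_neg at hap
      obtain ⟨i, hi⟩ := hap
      have h1 := degZ_nonneg (hpos _ hi)
      rw [degZ_sub_single] at h1
      have h2 : (degZ (x - Pi.single i (m : ℤ))).toNat ≤ n := by
        rw [degZ_sub_single]; omega
      obtain ⟨a, t, ha, ht, heq⟩ := ih (x - Pi.single i (m : ℤ)) hi h2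
      refine ⟨a, t + Pi.single i (m : ℤ), ha, ?_, ?_⟩
      · intro j
        have hj := ht j
        have h0 : (0 : ℤ) ≤ (Pi.single i (m : ℤ) : Fin d → ℤ) j ∧ (m : ℤ) ∣ (Pi.single i (m : ℤ) : Fin d → ℤ) j := by
          rcases eq_or_ne j i with rfl | hji
          · simp
          · simp [Pi.single_eq_of_ne hji]
        exact ⟨by simpa using add_nonneg hj.1 h0.1, dvd_add hj.2 h0.2⟩
      · have : x = a + t + Pi.single i (m : ℤ) := by rw [← heq]; abel
        rw [this]; abel

/-- For `w ∈ Soc(H,E)` and `h ∈ Ap(H,E)` there is a unique pair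
`(h', u)` with `h' ∈ Ap(H,E)`, `u ∈ ℕE` and `h + h' = w + u`; moreover
`deg u = deg h + deg h' - deg w` and `m ∣ deg u`. -/
theorem exists_unique_apery_pair {d m : ℕ} (hd : 1 ≤ d) (hm : 1 ≤ m)
    (H : AddSubmonoid (Fin d → ℤ)) (horth : IsOrthogonal d m H)
    (hCM : CMcond d m H)
    (w : Fin d → ℤ) (hw : w ∈ soc d m H)
    (h : Fin d → ℤ) (hh : h ∈ apery d m H) :
    (∃! p : (Fin d → ℤ) × (Fin d → ℤ),
      p.1 ∈ apery d m H ∧ inNE d m p.2 ∧ h + p.1 = w + p.2) ∧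
    (∀ h' u : Fin d → ℤ, h' ∈ apery d m H → inNE d m u → h + h' = w + u →
      degZ u = degZ h + degZ h' - degZ w ∧ (m : ℤ) ∣ degZ u) := by
    obtain ⟨hFG, hpos, hsingle, hrest⟩ := horth
    obtain ⟨hwAp, hwmax⟩ := hw
    have hwH : w ∈ H := hwAp.1
    have hhH : h ∈ H := hh.1
    have hmemG : ∀ x ∈ H, x ∈ AddSubgroup.closure (H : Set (Fin d → ℤ)) :=
      fun x hx => AddSubgroup.subset_closure hx
    -- Apply CM to g = w - h
    obtain ⟨h', ⟨hh'Ap, hh'Z⟩, huniq⟩ :=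
      hCM (w - h) (sub_mem (hmemG _ hwH) (hmemG _ hhH))
    set u : Fin d → ℤ := h + h' - w with hu_def
    have huZ : inZE d m u := by
      intro i
      have := hh'Z i
      have h1 : u i = -((w - h - h') i) := by simp [hu_def]; ring
      rw [h1]
      exact (this).neg_right
    have hsum : h + h' = w + u := by rw [hu_def]; abel
    -- Greedy decomposition of h + h'
    obtain ⟨a, t, haAp, htN, heq⟩ :=
      exists_apery_decomp hm H hpos (degZ (h + h')).toNat (h + h')
        (H.add_mem hhH hh'Ap.1) le_rfl
    -- CM uniqueness at g = h + h' forces a = w and t = u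
    obtain ⟨a₀, _, huniq₀⟩ := hCM (h + h') (hmemG _ (H.add_mem hhH hh'Ap.1))
    have hw_prop : w ∈ apery d m H ∧ inZE d m (h + h' - w) := by
      refine ⟨hwAp, ?_⟩
      intro i; exact huZ i
    have ha_prop : a ∈ apery d m H ∧ inZE d m (h + h' - a) := by
      refine ⟨haAp, ?_⟩
      intro i
      have h1 : (h + h' - a) i = t i := by rw [heq]; simp
      rw [h1]; exact (htN i).2
    have haw : a = w := (huniq₀ a ha_prop).trans (huniq₀ w hw_prop).symm
    have htu : t = u := by
      have : a + t = w + u := by rw [← heq, hsum]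
      rw [haw] at this
      exact add_left_cancel this
    have huN : inNE d m u := htu ▸ htN
    constructor
    · refine ⟨(h', u), ⟨hh'Ap, huN, hsum⟩, ?_⟩
      rintro ⟨h'', u''⟩ ⟨hh''Ap, hu''N, hsum''⟩
      have hh''Z : inZE d m ((w - h) - h'') := by
        intro i
        have h1 : ((w - h) - h'') i = -(u'' i) := by
          have := congrFun hsum'' i
          simp at this ⊢
          linarith
        rw [h1]
        exact ((hu''N i).2).neg_right
      have h2 : h'' = h' := huniq h'' ⟨hh''Ap, hh''Z⟩
      have h3 : u'' = u := by
        rw [h2] at hsum''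
        have := hsum.symm.trans hsum''
        exact (add_left_cancel this).symm
      simp [h2, h3]
    · intro h₁ u₁ hh₁ hu₁ hsum₁
      constructor
      · have := congrArg degZ hsum₁
        rw [degZ_add, degZ_add] at this
        linarith
      · exact Finset.dvd_sum fun i _ => (hu₁ i).2


end AGpaper
end

section
/- Let (H,E) be an orthogonal semigroup of order m satisfying the CM condition. Then for each fixed w ∈ Soc(H,E): Σ_{h ∈ Ap(H,E)} c_{w,h} = type H − 1 if and only if w is an AG witness. Consequently, H is an AG semigroup — i.e., there exists w ∈ Soc(H,E) with Σ_{h ∈ Ap(H,E)} c_{w,h} = type H − 1, which by the paper's multiplicity computation means that v = m e_1 + ⋯ + m e_d − w ∈ ω_H is an Ulrich element — if and only if there exists an AG witness w ∈ Soc(H,E). (This theorem generalizes Nari's characterization of almost symmetric numerical semigroups.) -/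
open scoped Classical

namespace AGpaper

/-- The socle: maximal elements of the Apéry set with respect to `≤_H`. -/
def socAG (d m : ℕ) (H : AddSubmonoid (Fin d → ℤ)) : Set (Fin d → ℤ) :=
  {x | x ∈ apery d m H ∧ ∀ y ∈ apery d m H, y - x ∈ H → x = y}

/-- An AG witness `w ∈ Soc(H,E)`: (i) for every `h ∈ Ap(H,E)`, `h ∈ Soc(H,E)\{w}` iff
`w - h ∉ H`; (ii) for every `h ∈ Soc(H,E)\{w}` there are `b ∈ E`, `h' ∈ Soc(H,E)` with
`h + h' = w + b`. -/
def AGwitness (d m : ℕ) (H : AddSubmonoid (Fin d → ℤ)) (w : Fin d → ℤ) : Prop :=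
  w ∈ socAG d m H ∧
  (∀ h ∈ apery d m H, ((h ∈ socAG d m H ∧ h ≠ w) ↔ w - h ∉ H)) ∧
  (∀ h ∈ socAG d m H, h ≠ w →
    ∃ i : Fin d, ∃ h' ∈ socAG d m H, h + h' = w + Pi.single i (m : ℤ))

section Aux

variable {d m : ℕ} {H : AddSubmonoid (Fin d → ℤ)}

lemma sub_mem_apery {w h : Fin d → ℤ} (hw : w ∈ apery d m H) (hh : h ∈ H)
    (hwh : w - h ∈ H) : w - h ∈ apery d m H := by
  refine ⟨hwh, fun i hi => hw.2 i ?_⟩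
  have e : w - Pi.single i (m : ℤ) = h + (w - h - Pi.single i (m : ℤ)) := by ring
  rw [e]; exact H.add_mem hh hi

lemma eq_zero_of_degZ {u : Fin d → ℤ} (hu : ∀ i, 0 ≤ u i) (h : degZ u = 0) : u = 0 := by
  funext i
  have := (Finset.sum_eq_zero_iff_of_nonneg (fun j _ => hu j)).mp h i (Finset.mem_univ i)
  simpa using this

lemma degZ_single (i : Fin d) (a : ℤ) : degZ (Pi.single i a) = a := by
  simp [degZ, Pi.single_apply]

lemma inZE_single (i : Fin d) : inZE d m (Pi.single i (m : ℤ)) := by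
  intro j
  rcases eq_or_ne j i with rfl | hj
  · simp
  · simp [Pi.single_apply, hj]

lemma eq_single_of_degZ (hm : 1 ≤ m) {u : Fin d → ℤ} (hu : inNE d m u)
    (h : degZ u = (m : ℤ)) : ∃ i, u = Pi.single i (m : ℤ) := by
  have hm' : (0 : ℤ) < m := by exact_mod_cast hm
  have hne : ∃ i, u i ≠ 0 := by
    by_contra hcon
    push_neg at hcon
    have h0 : degZ u = 0 := Finset.sum_eq_zero fun j _ => hcon j
    omega
  obtain ⟨i, hi⟩ := hne
  have hpos : 0 < u i := lt_of_le_of_ne (hu i).1 (Ne.symm hi)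
  have hge : (m : ℤ) ≤ u i := Int.le_of_dvd hpos (hu i).2
  have hle : u i ≤ degZ u := Finset.single_le_sum (fun j _ => (hu j).1) (Finset.mem_univ i)
  have hum : u i = m := by omega
  have hsplit : degZ u = u i + ∑ k ∈ Finset.univ.erase i, u k := by
    rw [degZ, ← Finset.add_sum_erase _ _ (Finset.mem_univ i)]
  have h0 : ∑ k ∈ Finset.univ.erase i, u k = 0 := by omega
  have hrest : ∀ j, j ≠ i → u j = 0 := by
    intro j hj
    exact (Finset.sum_eq_zero_iff_of_nonneg (fun k _ => (hu k).1)).mp h0 j (by simp [hj])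
  refine ⟨i, funext fun j => ?_⟩
  rcases eq_or_ne j i with rfl | hj
  · simp [hum]
  · simp [Pi.single_apply, hj, hrest j hj]

lemma apery_unique (hCM : CMcond d m H) {w h h₁ h₂ u₁ u₂ : Fin d → ℤ}
    (hw : w ∈ H) (hh : h ∈ H)
    (h1A : h₁ ∈ apery d m H) (h2A : h₂ ∈ apery d m H)
    (e1 : h + h₁ = w + u₁) (e2 : h + h₂ = w + u₂)
    (z1 : inZE d m u₁) (z2 : inZE d m u₂) : h₁ = h₂ := by
  have hg : w - h ∈ AddSubgroup.closure (H : Set (Fin d → ℤ)) :=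
    sub_mem (AddSubgroup.subset_closure hw) (AddSubgroup.subset_closure hh)
  obtain ⟨a, -, hau⟩ := hCM _ hg
  have k : ∀ (h' u' : Fin d → ℤ), h' ∈ apery d m H → h + h' = w + u' →
      inZE d m u' → h' = a := by
    intro h' u' hA' e' z'
    refine hau h' ⟨hA', fun i => ?_⟩
    have hv : w - h - h' = -u' := by linear_combination -e'
    rw [hv]
    simp only [Pi.neg_apply]
    exact dvd_neg.mpr (z' i)
  rw [k h₁ u₁ h1A e1 z1, k h₂ u₂ h2A e2 z2]

lemma c_vals (hm : 1 ≤ m) (hCM : CMcond d m H) {w h : Fin d → ℤ} {cwh : ℕ}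
    (hw : w ∈ socAG d m H) (hh : h ∈ apery d m H)
    (hex : ∃ h' ∈ apery d m H, ∃ u : Fin d → ℤ,
      inNE d m u ∧ h + h' = w + u ∧ degZ u = (m : ℤ) * (cwh : ℤ)) :
    (cwh = 0 ↔ w - h ∈ H) ∧
    (cwh = 1 ↔ ∃ i : Fin d, ∃ h' ∈ apery d m H, h + h' = w + Pi.single i (m : ℤ)) := by
  have hm' : (0 : ℤ) < m := by exact_mod_cast hm
  obtain ⟨h', hA', u, hNE, he, hdeg⟩ := hex
  constructor
  · constructor
    · intro h0
      have hdu : degZ u = 0 := by rw [hdeg, h0]; simp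
      have hu0 : u = 0 := eq_zero_of_degZ (fun i => (hNE i).1) hdu
      rw [hu0] at he
      have hwh : w - h = h' := by linear_combination -he
      rw [hwh]; exact hA'.1
    · intro hwh
      have hapw : w - h ∈ apery d m H := sub_mem_apery hw.1 hh.1 hwh
      have e2 : h + (w - h) = w + 0 := by ring
      have heq : h' = w - h :=
        apery_unique hCM hw.1.1 hh.1 hA' hapw he e2
          (fun i => (hNE i).2) (fun i => by simp)
      rw [heq] at he
      have hu0 : u = 0 := by linear_combination -he
      rw [hu0] at hdeg
      have hz : (m : ℤ) * (cwh : ℤ) = 0 := by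
        simpa [degZ] using hdeg.symm
      have : (cwh : ℤ) = 0 := by
        rcases mul_eq_zero.mp hz with h1 | h1
        · omega
        · exact h1
      exact_mod_cast this
  · constructor
    · intro h1
      have hdu : degZ u = (m : ℤ) := by rw [hdeg, h1]; simp
      obtain ⟨i, hui⟩ := eq_single_of_degZ hm hNE hdu
      rw [hui] at he
      exact ⟨i, h', hA', he⟩
    · rintro ⟨i, h'', hA'', e''⟩
      have heq : h' = h'' :=
        apery_unique hCM hw.1.1 hh.1 hA' hA'' he e''
          (fun j => (hNE j).2) (inZE_single i)
      rw [heq] at he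
      have hu : u = Pi.single i (m : ℤ) := by linear_combination e'' - he
      rw [hu, degZ_single] at hdeg
      have : (cwh : ℤ) = 1 := by
        have h1 : (m : ℤ) * (cwh : ℤ) = (m : ℤ) * 1 := by linarith [hdeg]
        exact mul_left_cancel₀ (by omega) h1
      exact_mod_cast this

end Aux

/-- (Generalized Nari criterion.)  For each `w ∈ Soc(H,E)`,
`Σ_{h ∈ Ap(H,E)} c_{w,h} = type H - 1` iff `w` is an AG witness; consequently `H` is an
AG semigroup (some `w ∈ Soc(H,E)` has `Σ_h c_{w,h} = type H - 1`, i.e.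
`v = m e₁ + ⋯ + m e_d - w` is an Ulrich element) iff an AG witness exists. -/
theorem AG_iff_witness {d m : ℕ} (hd : 1 ≤ d) (hm : 1 ≤ m)
    (H : AddSubmonoid (Fin d → ℤ)) (horth : IsOrthogonal d m H)
    (hCM : CMcond d m H)
    (A S : Finset (Fin d → ℤ)) (hA : (A : Set (Fin d → ℤ)) = apery d m H)
    (hS : (S : Set (Fin d → ℤ)) = socAG d m H)
    (c : (Fin d → ℤ) → (Fin d → ℤ) → ℕ)
    (hc : ∀ w ∈ socAG d m H, ∀ h ∈ apery d m H, ∃ h' ∈ apery d m H, ∃ u : Fin d → ℤ,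
      inNE d m u ∧ h + h' = w + u ∧ degZ u = (m : ℤ) * (c w h : ℤ)) :
    (∀ w ∈ S, ((∑ h ∈ A, c w h) = S.card - 1 ↔ AGwitness d m H w)) ∧
    ((∃ w ∈ S, (∑ h ∈ A, c w h) = S.card - 1) ↔ ∃ w, AGwitness d m H w) := by
  have main : ∀ w ∈ S, ((∑ h ∈ A, c w h) = S.card - 1 ↔ AGwitness d m H w) := by
    intro w hwS
    have hwsoc : w ∈ socAG d m H := by rw [← hS]; exact hwS
    have hwap : w ∈ apery d m H := hwsoc.1
    set T := S.erase w with hT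
    have hTsub : T ⊆ A := by
      intro x hx
      have hxS : x ∈ S := Finset.mem_of_mem_erase hx
      have hxsoc : x ∈ socAG d m H := by rw [← hS]; exact hxS
      rw [← Finset.mem_coe, hA]; exact hxsoc.1
    have hcardT : T.card = S.card - 1 := Finset.card_erase_of_mem hwS
    have cfact : ∀ h ∈ apery d m H,
        (c w h = 0 ↔ w - h ∈ H) ∧
        (c w h = 1 ↔ ∃ i : Fin d, ∃ h' ∈ apery d m H,
          h + h' = w + Pi.single i (m : ℤ)) :=
      fun h hh => c_vals hm hCM hwsoc hh (hc w hwsoc h hh)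
    have hT1 : ∀ h ∈ T, 1 ≤ c w h := by
      intro h hhT
      have hhS : h ∈ S := Finset.mem_of_mem_erase hhT
      have hhne : h ≠ w := Finset.ne_of_mem_erase hhT
      have hhsoc : h ∈ socAG d m H := by rw [← hS]; exact hhS
      have hnot : w - h ∉ H := fun hmem => hhne (hhsoc.2 w hwap hmem)
      have hcne : c w h ≠ 0 := fun h0 => hnot (((cfact h hhsoc.1).1).mp h0)
      omega
    have hsplit : ∑ h ∈ A \ T, c w h + ∑ h ∈ T, c w h = ∑ h ∈ A, c w h :=
      Finset.sum_sdiff hTsub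
    have hTlb : T.card ≤ ∑ h ∈ T, c w h := by
      calc T.card = ∑ _h ∈ T, 1 := by simp
        _ ≤ ∑ h ∈ T, c w h := Finset.sum_le_sum hT1
    constructor
    · intro hsum
      have hsum' : ∑ h ∈ A, c w h = T.card := by omega
      have h0a : ∑ h ∈ A \ T, c w h = 0 := by omega
      have h0b : ∑ h ∈ T, c w h = T.card := by omega
      have hzero : ∀ h ∈ A \ T, c w h = 0 :=
        fun h hh => Finset.sum_eq_zero_iff.mp h0a h hh
      have hone : ∀ h ∈ T, c w h = 1 := by
        have hiff := (Finset.sum_eq_sum_iff_of_le hT1).mp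
          (by rw [h0b]; simp)
        intro h hh
        exact (hiff h hh).symm
      have condi : ∀ h ∈ apery d m H, ((h ∈ socAG d m H ∧ h ≠ w) ↔ w - h ∉ H) := by
        intro h hh
        constructor
        · rintro ⟨hsoc, hne⟩ hmem
          exact hne (hsoc.2 w hwap hmem)
        · intro hnot
          have hhA : h ∈ A := by rw [← Finset.mem_coe, hA]; exact hh
          have hcne : c w h ≠ 0 := fun h0 => hnot ((cfact h hh).1.mp h0)
          have hhT : h ∈ T := by
            by_contra hcon
            exact hcne (hzero h (Finset.mem_sdiff.mpr ⟨hhA, hcon⟩))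
          have hhS : h ∈ S := Finset.mem_of_mem_erase hhT
          exact ⟨by rw [← hS]; exact hhS, Finset.ne_of_mem_erase hhT⟩
      have condii : ∀ h ∈ socAG d m H, h ≠ w →
          ∃ i : Fin d, ∃ h' ∈ socAG d m H, h + h' = w + Pi.single i (m : ℤ) := by
        intro h hsoc hne
        have hhS : h ∈ S := by rw [← Finset.mem_coe, hS]; exact hsoc
        have hhT : h ∈ T := Finset.mem_erase.mpr ⟨hne, hhS⟩
        obtain ⟨i, h', hA', e'⟩ := (cfact h hsoc.1).2.mp (hone h hhT)
        have hne' : w - h' ∉ H := by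
          intro hmem
          have hv : h - Pi.single i (m : ℤ) = w - h' := by linear_combination e'
          exact hsoc.1.2 i (hv ▸ hmem)
        have hgood : h' ∈ socAG d m H ∧ h' ≠ w := (condi h' hA').mpr hne'
        exact ⟨i, h', hgood.1, e'⟩
      exact ⟨hwsoc, condi, condii⟩
    · rintro ⟨-, condi, condii⟩
      have hone : ∀ h ∈ T, c w h = 1 := by
        intro h hhT
        have hhS : h ∈ S := Finset.mem_of_mem_erase hhT
        have hsoc : h ∈ socAG d m H := by rw [← hS]; exact hhS
        obtain ⟨i, h', hsoc', e'⟩ := condii h hsoc (Finset.ne_of_mem_erase hhT)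
        exact (cfact h hsoc.1).2.mpr ⟨i, h', hsoc'.1, e'⟩
      have hzero : ∀ h ∈ A \ T, c w h = 0 := by
        intro h hh
        rw [Finset.mem_sdiff] at hh
        have hap : h ∈ apery d m H := by rw [← hA]; exact Finset.mem_coe.mpr hh.1
        have hnsoc : ¬(h ∈ socAG d m H ∧ h ≠ w) := by
          rintro ⟨hsoc, hne⟩
          exact hh.2 (Finset.mem_erase.mpr ⟨hne, by
            rw [← Finset.mem_coe, hS]; exact hsoc⟩)
        have hwh : w - h ∈ H := by
          by_contra hcon
          exact hnsoc ((condi h hap).mpr hcon)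
        exact (cfact h hap).1.mpr hwh
      have : ∑ h ∈ A, c w h = T.card := by
        rw [← hsplit, Finset.sum_eq_zero hzero, Finset.sum_congr rfl hone]
        simp
      omega
  refine ⟨main, ?_, ?_⟩
  · rintro ⟨w, hwS, hsum⟩
    exact ⟨w, (main w hwS).mp hsum⟩
  · rintro ⟨w, hwit⟩
    have hwS : w ∈ S := by rw [← Finset.mem_coe, hS]; exact hwit.1
    exact ⟨w, hwS, (main w hwS).mpr hwit⟩

end AGpaper
end
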